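/- The Rényi entropy fails generalized additivity for q ≠ 1: for every real q with 0 < q < 1 there exist m, n, an orthonormal basis {w_j}_{j∈Fin m} of ℂ^m, probability weights p_j (p_j ≥ 0, ∑_j p_j = 1) and density matrices ρ_j on ℂ^n such that S_R(∑_j p_j (w_j w_jᴴ) ⊗ ρ_j) ≠ S_R(∑_j p_j w_j w_jᴴ) + ∑_j p_j S_R(ρ_j), where ⊗ is the Kronecker product. -/

import Mathlib

open scoped Kronecker
open Finset Matrix
open scoped ComplexOrder

noncomputable section

/-- A density matrix: positive semidefinite with unit trace. -/
def IsDensity {d : Type} [Fintype d] [DecidableEq d] (ρ : Matrix d d ℂ) : Prop :=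
  ρ.PosSemidef ∧ ρ.trace = 1

/-- An entropy family: a real number assigned to every square complex matrix of
every finite dimension. -/
def EntropyFamily : Type 1 :=
  ∀ (d : Type) [Fintype d] [DecidableEq d], Matrix d d ℂ → ℝ

/-- Concavity of an entropy family. -/
def EntropyFamily.Concave (S : EntropyFamily) : Prop :=
  ∀ (d : Type) [Fintype d] [DecidableEq d] (k : ℕ) (p : Fin k → ℝ)
    (ρ : Fin k → Matrix d d ℂ),
    (∀ j, 0 ≤ p j) → ∑ j, p j = 1 → (∀ j, IsDensity (ρ j)) →
    ∑ j, p j * S d (ρ j) ≤ S d (∑ j, (p j : ℂ) • ρ j)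

/-- The entropy family depends only on the nonzero spectrum: `S (A Aᴴ) = S (Aᴴ A)`. -/
def EntropyFamily.SpectrumDep (S : EntropyFamily) : Prop :=
  ∀ (d e : Type) [Fintype d] [DecidableEq d] [Fintype e] [DecidableEq e]
    (A : Matrix d e ℂ), S d (A * Aᴴ) = S e (Aᴴ * A)

/-- Partial trace over the first tensor factor. -/
def trA {da db : Type} [Fintype da] (ρ : Matrix (da × db) (da × db) ℂ) :
    Matrix db db ℂ :=
  Matrix.of fun j j' => ∑ i, ρ (i, j) (i, j')

/-- Partial trace over the second tensor factor. -/
def trB {da db : Type} [Fintype db] (ρ : Matrix (da × db) (da × db) ℂ) :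
    Matrix da da ℂ :=
  Matrix.of fun i i' => ∑ j, ρ (i, j) (i', j)

/-- A POVM: a finite family of positive semidefinite matrices summing to `1`. -/
def IsPOVM {d : Type} [Fintype d] [DecidableEq d] {k : ℕ}
    (P : Fin k → Matrix d d ℂ) : Prop :=
  (∀ j, (P j).PosSemidef) ∧ ∑ j, P j = 1

/-- Probability of POVM outcome `P` on the first factor: `Tr((P ⊗ I) ρ)`. -/
def prob {da db : Type} [Fintype da] [Fintype db] [DecidableEq da] [DecidableEq db]
    (P : Matrix da da ℂ) (ρ : Matrix (da × db) (da × db) ℂ) : ℝ :=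
  (((P ⊗ₖ (1 : Matrix db db ℂ)) * ρ).trace).re

/-- Conditional state on the second factor given POVM outcome `P`. -/
def condB {da db : Type} [Fintype da] [Fintype db] [DecidableEq da] [DecidableEq db]
    (P : Matrix da da ℂ) (ρ : Matrix (da × db) (da × db) ℂ) : Matrix db db ℂ :=
  (((prob P ρ)⁻¹ : ℝ) : ℂ) • trA ((P ⊗ₖ (1 : Matrix db db ℂ)) * ρ)

/-- The Holevo quantity `χ(P, b)`. -/
def holevoB (S : EntropyFamily) {da db : Type} [Fintype da] [DecidableEq da]
    [Fintype db] [DecidableEq db] {k : ℕ} (P : Fin k → Matrix da da ℂ)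
    (ρ : Matrix (da × db) (da × db) ℂ) : ℝ :=
  S db (trA ρ) -
    ∑ j ∈ univ.filter (fun j => prob (P j) ρ ≠ 0),
      prob (P j) ρ * S db (condB (P j) ρ)

/-- Eigenvalues of a Hermitian matrix (junk value `0` if not Hermitian). -/
def eigs {d : Type} [Fintype d] [DecidableEq d] (X : Matrix d d ℂ) : d → ℝ :=
  if h : X.IsHermitian then h.eigenvalues else 0

/-- von Neumann entropy `S(ρ) = ∑ᵢ (−λᵢ log λᵢ)`. -/
def vN {d : Type} [Fintype d] [DecidableEq d] (ρ : Matrix d d ℂ) : ℝ :=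
  ∑ i, Real.negMulLog (eigs ρ i)

/-- von Neumann entropy as an entropy family. -/
def vNF : EntropyFamily := fun d _ _ ρ => vN ρ

/-- Quadratic entropy `S_Q(ρ) = 1 − Re Tr(ρ²)`. -/
def SQ {d : Type} [Fintype d] (ρ : Matrix d d ℂ) : ℝ := 1 - ((ρ * ρ).trace).re

/-- Quadratic entropy as an entropy family. -/
def SQF : EntropyFamily := fun d _ _ ρ => SQ ρ

/-- The outer product `ψ ψᴴ`. -/
def outer {d : Type} (ψ : d → ℂ) : Matrix d d ℂ := Matrix.vecMulVec ψ (star ψ)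

/-- A unit vector. -/
def UnitVec {d : Type} [Fintype d] (ψ : d → ℂ) : Prop := ∑ i, ‖ψ i‖ ^ 2 = 1

/-- Kraus operators of a quantum channel: `∑ᵢ Kᵢᴴ Kᵢ = 1`. -/
def IsKraus {n r t : ℕ} (K : Fin t → Matrix (Fin r) (Fin n) ℂ) : Prop :=
  ∑ i, (K i)ᴴ * K i = 1

/-- Action of the quantum channel with Kraus operators `K`. -/
def channel {n r t : ℕ} (K : Fin t → Matrix (Fin r) (Fin n) ℂ)
    (ρ : Matrix (Fin n) (Fin n) ℂ) : Matrix (Fin r) (Fin r) ℂ :=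
  ∑ i, K i * ρ * (K i)ᴴ

/-- Conditional joint state after a POVM element with square root `Q` and
outcome probability `p`: `(1/p) (Q ⊗ I) ρ (Q ⊗ I)`. -/
def condJoint {da db : Type} [Fintype da] [Fintype db] [DecidableEq da]
    [DecidableEq db] (Q : Matrix da da ℂ) (p : ℝ)
    (ρ : Matrix (da × db) (da × db) ℂ) : Matrix (da × db) (da × db) ℂ :=
  ((p⁻¹ : ℝ) : ℂ) • ((Q ⊗ₖ (1 : Matrix db db ℂ)) * ρ * (Q ⊗ₖ (1 : Matrix db db ℂ)))

/-- Tsallis entropy with parameter `q`. -/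
def tsallis (q : ℝ) {d : Type} [Fintype d] [DecidableEq d]
    (ρ : Matrix d d ℂ) : ℝ :=
  ((∑ i, eigs ρ i ^ q) - 1) / (1 - q)

/-- Rényi entropy with parameter `q`. -/
def renyi (q : ℝ) {d : Type} [Fintype d] [DecidableEq d]
    (ρ : Matrix d d ℂ) : ℝ :=
  (1 / (1 - q)) * Real.log (∑ i, eigs ρ i ^ q)

section AuxEigs
open Polynomial

lemma my_charpoly_diagonal {d : Type} [Fintype d] [DecidableEq d] (v : d → ℂ) :
    (Matrix.diagonal v).charpoly = ∏ i, (X - C (v i)) := by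
  have h : (Matrix.diagonal v).charmatrix
      = Matrix.diagonal (fun i => (X : ℂ[X]) - C (v i)) := by
    ext i j
    rcases eq_or_ne i j with rfl | hij
    · simp [Matrix.charmatrix_apply_eq]
    · simp [Matrix.charmatrix_apply_ne _ _ _ hij, Matrix.diagonal_apply_ne _ hij]
  rw [Matrix.charpoly, h, Matrix.det_diagonal]

lemma my_charpoly_conj {d : Type} [Fintype d] [DecidableEq d]
    (U : Matrix.unitaryGroup d ℂ) (D : Matrix d d ℂ) :
    ((U : Matrix d d ℂ) * D * (star U : Matrix d d ℂ)).charpoly = D.charpoly := by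
  let f : Matrix d d ℂ →+* Matrix d d ℂ[X] := (C : ℂ →+* ℂ[X]).mapMatrix
  have hUU : (U : Matrix d d ℂ) * (star U : Matrix d d ℂ) = 1 :=
    Matrix.mem_unitaryGroup_iff.mp U.2
  have hfUU : f (U : Matrix d d ℂ) * f (star U : Matrix d d ℂ) = 1 := by
    rw [← _root_.map_mul, hUU, _root_.map_one]
  have hdet : (f (U : Matrix d d ℂ)).det * (f (star U : Matrix d d ℂ)).det = 1 := by
    rw [← Matrix.det_mul, hfUU, Matrix.det_one]
  have hcomm : Matrix.scalar d (X : ℂ[X]) * f (U : Matrix d d ℂ)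
      = f (U : Matrix d d ℂ) * Matrix.scalar d (X : ℂ[X]) :=
    (Matrix.scalar_commute (X : ℂ[X]) (fun r' => Commute.all _ _) _).eq
  have hcm : ((U : Matrix d d ℂ) * D * (star U : Matrix d d ℂ)).charmatrix
      = f (U : Matrix d d ℂ) * D.charmatrix * f (star U : Matrix d d ℂ) := by
    rw [Matrix.charmatrix, Matrix.charmatrix, mul_sub, sub_mul, _root_.map_mul, _root_.map_mul]
    congr 1
    rw [← hcomm, mul_assoc, hfUU, mul_one]
  rw [Matrix.charpoly, Matrix.charpoly, hcm, Matrix.det_mul, Matrix.det_mul]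
  ring_nf
  rw [mul_comm, ← mul_assoc, mul_comm (f (star U : Matrix d d ℂ)).det, hdet, one_mul]

lemma eigs_diagonal_multiset {d : Type} [Fintype d] [DecidableEq d] (v : d → ℝ)
    (hA : (Matrix.diagonal (fun i => ((v i : ℝ) : ℂ))).IsHermitian) :
    (Finset.univ.val.map fun i => ((hA.eigenvalues i : ℝ) : ℂ))
      = Finset.univ.val.map fun i => ((v i : ℝ) : ℂ) := by
  set A := Matrix.diagonal (fun i => ((v i : ℝ) : ℂ)) with hAdef
  have h1 : A.charpoly = ∏ i, (X - C ((v i : ℝ) : ℂ)) := my_charpoly_diagonal _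
  have h2 : A.charpoly = ∏ i, (X - C ((hA.eigenvalues i : ℝ) : ℂ)) := by
    conv_lhs => rw [hA.spectral_theorem]
    rw [Unitary.conjStarAlgAut_apply, my_charpoly_conj, my_charpoly_diagonal]
    exact Finset.prod_congr rfl fun i _ => rfl
  have key : ∏ i, (X - C ((hA.eigenvalues i : ℝ) : ℂ)) = ∏ i, (X - C ((v i : ℝ) : ℂ)) :=
    h2.symm.trans h1
  have e1 : ∀ (w : d → ℂ), ∏ i, (X - C (w i))
      = ((Finset.univ.val.map w).map fun a => X - C a).prod := by
    intro w
    rw [Multiset.map_map]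
    rfl
  have := congrArg Polynomial.roots ((e1 _).symm.trans (key.trans (e1 _)))
  rwa [Polynomial.roots_multiset_prod_X_sub_C, Polynomial.roots_multiset_prod_X_sub_C] at this

/-- Sum of a function of eigenvalues of a real diagonal matrix. -/
lemma sum_f_eigs_diagonal {d : Type} [Fintype d] [DecidableEq d] (v : d → ℝ) (f : ℝ → ℝ) :
    ∑ i, f (eigs (Matrix.diagonal (fun i => ((v i : ℝ) : ℂ))) i) = ∑ i, f (v i) := by
  have hA : (Matrix.diagonal (fun i => ((v i : ℝ) : ℂ))).IsHermitian :=
    Matrix.isHermitian_diagonal_of_self_adjoint _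
      (funext fun i => Complex.conj_ofReal _)
  have heigs : eigs (Matrix.diagonal (fun i => ((v i : ℝ) : ℂ))) = hA.eigenvalues := by
    rw [eigs, dif_pos hA]
  have hm := eigs_diagonal_multiset v hA
  rw [heigs]
  have h1 : ∑ i, f (hA.eigenvalues i)
      = (Multiset.map (fun z : ℂ => f z.re)
          (Finset.univ.val.map fun i => ((hA.eigenvalues i : ℝ) : ℂ))).sum := by
    rw [Multiset.map_map]
    simp only [Function.comp_def, Complex.ofReal_re]
    rfl
  have h2 : ∑ i, f (v i)
      = (Multiset.map (fun z : ℂ => f z.re)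
          (Finset.univ.val.map fun i => ((v i : ℝ) : ℂ))).sum := by
    rw [Multiset.map_map]
    simp only [Function.comp_def, Complex.ofReal_re]
    rfl
  rw [h1, h2, hm]

end AuxEigs

lemma renyi_diagonal (q : ℝ) {d : Type} [Fintype d] [DecidableEq d] (v : d → ℝ) :
    renyi q (Matrix.diagonal (fun i => ((v i : ℝ) : ℂ)))
      = (1 / (1 - q)) * Real.log (∑ i, v i ^ q) := by
  rw [renyi, sum_f_eigs_diagonal v (fun x => x ^ q)]

/-- the Rényi entropy fails generalized additivity for
`0 < q < 1`. -/
theorem renyi_fails_generalized_additivity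
    (q : ℝ) (hq0 : 0 < q) (hq1 : q < 1) :
    ∃ (m n : ℕ) (w : Fin m → Fin m → ℂ) (p : Fin m → ℝ)
      (ρ : Fin m → Matrix (Fin n) (Fin n) ℂ),
      (∀ i i', ∑ x, star (w i x) * w i' x = if i = i' then 1 else 0) ∧
      (∀ j, 0 ≤ p j) ∧ ∑ j, p j = 1 ∧ (∀ j, IsDensity (ρ j)) ∧
      renyi q (∑ j, (p j : ℂ) • (outer (w j) ⊗ₖ ρ j)) ≠
        renyi q (∑ j, (p j : ℂ) • outer (w j)) + ∑ j, p j * renyi q (ρ j) := by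
  have h1q : (0 : ℝ) < 1 - q := by linarith
  refine ⟨2, 2, fun i x => if i = x then 1 else 0, ![1/2, 1/2],
    ![Matrix.diagonal (fun i => ((![1, 0] i : ℝ) : ℂ)),
      Matrix.diagonal (fun i => ((![1/2, 1/2] i : ℝ) : ℂ))], ?_, ?_, ?_, ?_, ?_⟩
  · intro i i'
    fin_cases i <;> fin_cases i' <;> simp [Fin.sum_univ_two]
  · intro j; fin_cases j <;> norm_num
  · norm_num [Fin.sum_univ_two]
  · intro j
    fin_cases j <;>
      refine ⟨Matrix.posSemidef_diagonal_iff.mpr fun i => ?_, by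
        norm_num [Matrix.trace_diagonal, Fin.sum_univ_two]⟩ <;>
      · fin_cases i <;> exact Complex.zero_le_real.mpr (by norm_num)
  · -- the entropy computation
    have houter : ∀ j : Fin 2, outer (fun x => if j = x then (1:ℂ) else 0)
        = Matrix.diagonal (fun x => if j = x then (1:ℂ) else 0) := by
      intro j
      ext i i'
      fin_cases j <;> fin_cases i <;> fin_cases i' <;>
        simp [outer, Matrix.vecMulVec_apply]
    have hjoint : (∑ j : Fin 2, ((![(1:ℝ)/2, 1/2] j : ℝ) : ℂ) •
          (outer ((fun (i : Fin 2) (x : Fin 2) => if i = x then (1:ℂ) else 0) j) ⊗ₖ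
            (![Matrix.diagonal (fun i => ((![(1:ℝ), 0] i : ℝ) : ℂ)),
               Matrix.diagonal (fun i => ((![(1:ℝ)/2, 1/2] i : ℝ) : ℂ))] j)))
        = Matrix.diagonal
            (fun i : Fin 2 × Fin 2 => ((![![(1:ℝ)/2, 0], ![1/4, 1/4]] i.1 i.2 : ℝ) : ℂ)) := by
      rw [Fin.sum_univ_two]
      simp only [Matrix.cons_val_zero, Matrix.cons_val_one, Matrix.head_cons]
      rw [houter 0, houter 1, Matrix.diagonal_kronecker_diagonal,
        Matrix.diagonal_kronecker_diagonal]
      ext i k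
      rcases eq_or_ne i k with rfl | hik
      · obtain ⟨a, b⟩ := i
        fin_cases a <;> fin_cases b <;>
          simp [Matrix.diagonal_apply_eq] <;> norm_num
      · simp [Matrix.diagonal_apply_ne _ hik, Matrix.diagonal_apply_ne _ hik]
    have hmarg : (∑ j : Fin 2, ((![(1:ℝ)/2, 1/2] j : ℝ) : ℂ) •
          outer ((fun (i : Fin 2) (x : Fin 2) => if i = x then (1:ℂ) else 0) j))
        = Matrix.diagonal (fun i : Fin 2 => ((![(1:ℝ)/2, 1/2] i : ℝ) : ℂ)) := by
      rw [Fin.sum_univ_two]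
      simp only [Matrix.cons_val_zero, Matrix.cons_val_one, Matrix.head_cons]
      rw [houter 0, houter 1]
      ext i k
      rcases eq_or_ne i k with rfl | hik
      · fin_cases i <;> simp [Matrix.diagonal_apply_eq] <;> norm_num
      · simp [Matrix.diagonal_apply_ne _ hik]
    -- rpow arithmetic
    have hhalf : ((1:ℝ)/2) ^ q = 2 ^ (-q) := by
      rw [Real.rpow_neg (by norm_num), one_div, Real.inv_rpow (by norm_num)]
    set u := (2:ℝ) ^ (-q) with hu
    have hupos : (0:ℝ) < u := Real.rpow_pos_of_pos (by norm_num) _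
    set r := (2:ℝ) ^ ((1-q)/2) with hr
    have hrgt : 1 < r := by
      rw [hr, Real.one_lt_rpow_iff_of_pos (by norm_num)]
      left; constructor <;> [norm_num; linarith]
    have hrr : r * r = 2 * u := by
      rw [hr, hu, ← Real.rpow_add (by norm_num),
        show ((1-q)/2 + (1-q)/2) = 1 + (-q) by ring,
        Real.rpow_add (by norm_num), Real.rpow_one]
    have hq4 : ((1:ℝ)/4) ^ q = u * u := by
      rw [hu, show ((1:ℝ)/4) = (1/2)*(1/2) by norm_num,
        Real.mul_rpow (by norm_num) (by norm_num), hhalf]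
    have hT : (2:ℝ) ^ ((3/2) * (1-q)) = u * (2 * r) := by
      have h : u * (2*r) = 2 ^ (-q + (1 + (1-q)/2)) := by
        rw [hu, hr, Real.rpow_add (by norm_num : (0:ℝ) < 2),
          Real.rpow_add (by norm_num : (0:ℝ) < 2), Real.rpow_one]
      rw [h, show (-q + (1 + (1-q)/2)) = (3/2)*(1-q) by ring]
    -- renyi of ρ₀ and ρ₁
    have hrho0 : renyi q (Matrix.diagonal (fun i => ((![(1:ℝ), 0] i : ℝ) : ℂ))) = 0 := by
      rw [renyi_diagonal, Fin.sum_univ_two]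
      norm_num [Real.zero_rpow hq0.ne', Real.one_rpow]
    have hsum2 : (∑ i : Fin 2, (![(1:ℝ)/2, 1/2] i) ^ q) = 2 * u := by
      rw [Fin.sum_univ_two]
      simp only [Matrix.cons_val_zero, Matrix.cons_val_one, Matrix.head_cons]
      rw [hhalf]; ring
    have hlog2u : Real.log (2 * u) = (1-q) * Real.log 2 := by
      have : (2:ℝ) * u = 2 ^ (1-q) := by
        rw [hu, show (1-q) = 1 + (-q) by ring,
          Real.rpow_add (by norm_num : (0:ℝ) < 2), Real.rpow_one]
      rw [this, Real.log_rpow (by norm_num)]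
    have hrho1 : renyi q (Matrix.diagonal (fun i => ((![(1:ℝ)/2, 1/2] i : ℝ) : ℂ)))
        = Real.log 2 := by
      rw [renyi_diagonal, hsum2, hlog2u]
      field_simp
    -- conclude
    rw [hjoint, hmarg, renyi_diagonal, Fin.sum_univ_two]
    simp only [Matrix.cons_val_zero, Matrix.cons_val_one, Matrix.head_cons]
    rw [hrho0, hrho1]
    have hsumJ : (∑ i : Fin 2 × Fin 2, (![![(1:ℝ)/2, 0], ![1/4, 1/4]] i.1 i.2) ^ q)
        = u * (1 + r * r) := by
      rw [Fintype.sum_prod_type, Fin.sum_univ_two]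
      simp only [Matrix.cons_val_zero, Matrix.cons_val_one, Matrix.head_cons,
        Fin.sum_univ_two]
      rw [Real.zero_rpow hq0.ne', hhalf, hq4, hrr]
      ring
    rw [hsumJ]
    have hTpos : (0:ℝ) < u * (2 * r) := by positivity
    have hst : u * (2 * r) < u * (1 + r * r) := by nlinarith [sq_nonneg (r-1)]
    have hloglt := Real.log_lt_log hTpos hst
    rw [← hT, Real.log_rpow (by norm_num : (0:ℝ) < 2)] at hloglt
    have hfinal : Real.log 2 + (1/2 * 0 + 1/2 * Real.log 2)
        < (1/(1-q)) * Real.log (u * (1 + r * r)) := by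
      have h2 : (3/2) * ((1-q) * Real.log 2) < Real.log (u * (1 + r * r)) := by
        nlinarith [hloglt]
      have h3 := mul_lt_mul_of_pos_left h2 (by positivity : (0:ℝ) < 1/(1-q))
      calc Real.log 2 + (1/2 * 0 + 1/2 * Real.log 2)
          = (1/(1-q)) * ((3/2) * ((1-q) * Real.log 2)) := by field_simp; ring
        _ < _ := h3
    intro hcontra
    rw [hcontra] at hfinal
    linarith [hfinal]
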